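/- arXiv:1012.2281 — 4 statements merged into one kernel-verified Lean document; each statement's English description precedes it below -/
import Mathlib

section
/- Let C be the separated invariant set of an iterated function system 𝒮 = {S_1,…,S_N} in G. Then there exists a constant α_C > 0, depending only on C, such that for every nonempty finite word v one has dist(C_v, C∖C_v) ≥ α_C · diam(C_v), where dist and diam are taken with respect to the metric d. -/
open MeasureTheory Metric Set
open scoped ENNReal NNReal

/-- A family of dilations on a metric group `G`: continuous group homomorphisms
`δ r : G → G` for `r > 0` with `δ 1 = id`, scaling the metric by `r`, and
satisfying `δ (r*s) = δ r ∘ δ s`. -/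
structure Dilations (G : Type*) [MetricSpace G] [Group G] where
  δ : ℝ → G → G
  map_mul : ∀ r : ℝ, 0 < r → ∀ x y : G, δ r (x * y) = δ r x * δ r y
  continuous : ∀ r : ℝ, 0 < r → Continuous (δ r)
  map_one' : δ 1 = id
  dist_eq : ∀ r : ℝ, 0 < r → ∀ x y : G, dist (δ r x) (δ r y) = r * dist x y
  comp : ∀ r s : ℝ, 0 < r → 0 < s → δ (r * s) = δ r ∘ δ s

/-- For a word `w = [i₁, …, iₘ]`, the composition `S_{i₁} ∘ ⋯ ∘ S_{iₘ}`. -/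
def wordMap {G : Type*} {ι : Type*} (S : ι → G → G) : List ι → G → G
  | [] => id
  | i :: w => S i ∘ wordMap S w

/-!
Distinct first-level pieces `S i '' C` are disjoint compact sets, hence at some distance `ε > 0`
from each other. If `p ∈ C_v` and `y ∈ C \ C_v` with `v = i :: w`, either `y` lies in the same
piece `S i '' C`, and then the similarity `S i` reduces the claim to the word `w` at scale
`r i`, or `y` lies in another piece and `dist p y ≥ ε`. By induction `dist p y ≥ ε · ρ_v`, where
`ρ_v` is the product of the ratios along `v`, while `diam C_v ≤ ρ_v · diam C`; so
`α = ε / (diam C + 1)` works, the `+ 1` only guarding against `diam C = 0`.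
-/

open Filter Topology

theorem exists_pos_le_dist_of_pairwise_disjoint {X ι : Type*} [MetricSpace X] [Finite ι]
    {K : ι → Set X} (hK : ∀ i, IsCompact (K i))
    (hdisj : Pairwise fun i j => Disjoint (K i) (K j)) :
    ∃ ε > 0, ∀ i j, i ≠ j → ∀ x ∈ K i, ∀ y ∈ K j, ε ≤ dist x y := by
  have hpair : ∀ i j, ∀ᶠ ε in 𝓝[>] (0 : ℝ), i ≠ j → ∀ x ∈ K i, ∀ y ∈ K j, ε ≤ dist x y := by
    intro i j
    by_cases hij : i = j
    · exact Eventually.of_forall fun _ h => absurd hij h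
    obtain ⟨δ, hδ, hlt⟩ := exists_pos_forall_lt_edist (hK i) (hK j).isClosed (hdisj hij)
    filter_upwards [Ioo_mem_nhdsGT hδ] with ε hε _ x hx y hy
    have hδxy : (δ : ℝ) < dist x y := by
      have := hlt x hx y hy
      rw [edist_nndist, ENNReal.coe_lt_coe] at this
      exact_mod_cast this
    exact hε.2.le.trans hδxy.le
  simp only [← eventually_all] at hpair
  exact (hpair.and self_mem_nhdsWithin).exists.imp fun ε h => ⟨h.2, h.1⟩

theorem image_wordMap_cons {X ι : Type*} (S : ι → X → X) (i : ι) (w : List ι) (C : Set X) :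
    wordMap S (i :: w) '' C = S i '' (wordMap S w '' C) :=
  image_comp _ _ _

theorem image_wordMap_subset {X ι : Type*} {S : ι → X → X} {C : Set X} (hC : ∀ i, S i '' C ⊆ C)
    (v : List ι) : wordMap S v '' C ⊆ C := by
  induction v with
  | nil => simp [wordMap]
  | cons i w ih => rw [image_wordMap_cons]; exact (image_mono ih).trans (hC i)

theorem prod_map_mem_Icc {ι : Type*} {r : ι → ℝ} (hr : ∀ i, r i ∈ Icc (0 : ℝ) 1) (v : List ι) :
    (v.map r).prod ∈ Icc (0 : ℝ) 1 := by
  induction v with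
  | nil => simp
  | cons i w ih =>
    rw [List.map_cons, List.prod_cons]
    exact ⟨mul_nonneg (hr i).1 ih.1, mul_le_one₀ (hr i).2 ih.1 ih.2⟩

section WordMaps

variable {X ι : Type*} [MetricSpace X] {S : ι → X → X} {r : ι → ℝ}
  (hS : ∀ i x y, dist (S i x) (S i y) = r i * dist x y) (hr : ∀ i, r i ∈ Icc (0 : ℝ) 1)
include hS

theorem dist_wordMap (v : List ι) (x y : X) :
    dist (wordMap S v x) (wordMap S v y) = (v.map r).prod * dist x y := by
  induction v generalizing x y with
  | nil => simp [wordMap]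
  | cons i w ih =>
    simp only [wordMap, Function.comp_apply, hS, ih, List.map_cons, List.prod_cons, mul_assoc]

include hr

theorem diam_image_wordMap_le {C : Set X} (hC : IsCompact C) (v : List ι) :
    diam (wordMap S v '' C) ≤ (v.map r).prod * diam C := by
  have hρ := (prod_map_mem_Icc hr v).1
  refine diam_le_of_forall_dist_le (mul_nonneg hρ diam_nonneg) ?_
  rintro _ ⟨x, hx, rfl⟩ _ ⟨y, hy, rfl⟩
  rw [dist_wordMap hS]
  exact mul_le_mul_of_nonneg_left (dist_le_diam_of_mem hC.isBounded hx hy) hρ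

theorem mul_prod_le_dist_of_mem_image_wordMap {C : Set X} (hCinv : C = ⋃ i, S i '' C)
    {ε : ℝ} (hε : 0 ≤ ε) (hsep : ∀ i j, i ≠ j → ∀ x ∈ S i '' C, ∀ y ∈ S j '' C, ε ≤ dist x y)
    (v : List ι) :
    ∀ p ∈ wordMap S v '' C, ∀ y ∈ C \ wordMap S v '' C, ε * (v.map r).prod ≤ dist p y := by
  induction v with
  | nil => simp [wordMap]
  | cons i w ih =>
    rw [image_wordMap_cons, List.map_cons, List.prod_cons]
    rintro _ ⟨_, ⟨p, hp, rfl⟩, rfl⟩ y ⟨hyC, hyv⟩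
    by_cases hyi : y ∈ S i '' C
    · obtain ⟨y, hy, rfl⟩ := hyi
      have hyw : y ∉ wordMap S w '' C := fun h => hyv (mem_image_of_mem _ h)
      calc ε * (r i * (w.map r).prod) = r i * (ε * (w.map r).prod) := by ring
        _ ≤ r i * dist (wordMap S w p) y := by
          gcongr
          · exact (hr i).1
          · exact ih _ (mem_image_of_mem _ hp) y ⟨hy, hyw⟩
        _ = dist (S i (wordMap S w p)) (S i y) := (hS i _ _).symm
    · obtain ⟨j, hyj⟩ := mem_iUnion.mp (hCinv ▸ hyC)
      have hsub (k : ι) : S k '' C ⊆ C :=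
        (subset_iUnion (fun j => S j '' C) k).trans hCinv.symm.subset
      have hpi : S i (wordMap S w p) ∈ S i '' C :=
        mem_image_of_mem _ (image_wordMap_subset hsub w (mem_image_of_mem _ hp))
      calc ε * (r i * (w.map r).prod) ≤ ε :=
            mul_le_of_le_one_right hε (prod_map_mem_Icc hr (i :: w)).2
        _ ≤ dist (S i (wordMap S w p)) y :=
            hsep i j (fun h => hyi (h ▸ hyj)) _ hpi y hyj

theorem exists_pos_mul_diam_image_wordMap_le_dist [Finite ι] {C : Set X} (hC : IsCompact C)
    (hCinv : C = ⋃ i, S i '' C) (hsep : Pairwise fun i j => Disjoint (S i '' C) (S j '' C)) :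
    ∃ α > 0, ∀ v : List ι, ∀ p ∈ wordMap S v '' C, ∀ y ∈ C \ wordMap S v '' C,
      α * diam (wordMap S v '' C) ≤ dist p y := by
  have hlip (i : ι) : LipschitzWith (r i).toNNReal (S i) :=
    LipschitzWith.of_dist_le_mul fun x y => by rw [hS, Real.coe_toNNReal _ (hr i).1]
  obtain ⟨ε, hε, hεsep⟩ :=
    exists_pos_le_dist_of_pairwise_disjoint (fun i => hC.image (hlip i).continuous) hsep
  set α := ε / (diam C + 1)
  have hαC : α * diam C ≤ ε := by
    rw [div_mul_eq_mul_div, div_le_iff₀ (by positivity)]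
    nlinarith [diam_nonneg (s := C)]
  refine ⟨α, by positivity, fun v p hp y hy => ?_⟩
  have hρ := prod_map_mem_Icc hr v
  calc α * diam (wordMap S v '' C) ≤ α * ((v.map r).prod * diam C) := by
        gcongr
        exact diam_image_wordMap_le hS hr hC v
    _ = (v.map r).prod * (α * diam C) := by ring
    _ ≤ (v.map r).prod * ε := by gcongr; exact hρ.1
    _ = ε * (v.map r).prod := mul_comm _ _
    _ ≤ dist p y := mul_prod_le_dist_of_mem_image_wordMap hS hr hCinv hε.le hεsep v p hp y hy

end WordMaps

theorem stmt1_general {G : Type*} [MetricSpace G] [Group G]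
    (hleft : ∀ q : G, Isometry fun x : G => q * x)
    (D : Dilations G)
    {N : ℕ} (q : Fin N → G) (r : Fin N → ℝ)
    (hr : ∀ i, r i ∈ Set.Ioo (0 : ℝ) 1)
    (S : Fin N → G → G) (hS : ∀ i x, S i x = q i * D.δ (r i) x)
    (C : Set G) (hCc : IsCompact C)
    (hCinv : C = ⋃ i, S i '' C)
    (hsep : Pairwise fun i j => Disjoint (S i '' C) (S j '' C)) :
    ∃ α : ℝ, 0 < α ∧ ∀ v : List (Fin N), v ≠ [] →
      ∀ p ∈ wordMap S v '' C, ∀ y ∈ C \ wordMap S v '' C,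
        α * diam (wordMap S v '' C) ≤ dist p y := by
  have hSdist (i : Fin N) (x y : G) : dist (S i x) (S i y) = r i * dist x y := by
    rw [hS, hS, (hleft (q i)).dist_eq, D.dist_eq _ (hr i).1]
  obtain ⟨α, hα, hαsep⟩ := exists_pos_mul_diam_image_wordMap_le_dist hSdist
    (fun i => Ioo_subset_Icc_self (hr i)) hCc hCinv hsep
  exact ⟨α, hα, fun v _ => hαsep v⟩

/-- **Theorem (separation constant).** If `C` is the separated invariant set of an IFS of
similarities on a complete separable metric group with dilations, then there is `α_C > 0`
such that `dist(C_v, C∖C_v) ≥ α_C · diam(C_v)` for every nonempty finite word `v`, i.e.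
`dist p y ≥ α_C · diam(C_v)` for all `p ∈ C_v` and `y ∈ C∖C_v`. -/
theorem stmt1 {G : Type*} [MetricSpace G] [Group G] [CompleteSpace G]
    [TopologicalSpace.SeparableSpace G]
    (hleft : ∀ q : G, Isometry fun x : G => q * x)
    (D : Dilations G)
    {N : ℕ} (hN : 2 ≤ N) (q : Fin N → G) (r : Fin N → ℝ)
    (hr : ∀ i, r i ∈ Set.Ioo (0 : ℝ) 1)
    (S : Fin N → G → G) (hS : ∀ i x, S i x = q i * D.δ (r i) x)
    (C : Set G) (hCc : IsCompact C) (hCne : C.Nonempty)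
    (hCinv : C = ⋃ i, S i '' C)
    (hsep : Pairwise fun i j => Disjoint (S i '' C) (S j '' C)) :
    ∃ α : ℝ, 0 < α ∧ ∀ v : List (Fin N), v ≠ [] →
      ∀ p ∈ wordMap S v '' C, ∀ y ∈ C \ wordMap S v '' C,
        α * diam (wordMap S v '' C) ≤ dist p y :=
  stmt1_general hleft D q r hr S hS C hCc hCinv hsep
end

section
/- Let 𝒮 = {S_1,…,S_N} be an iterated function system in G whose invariant set C is separated, let s > 0 satisfy 0 < ℋ^s(C) < ∞, and set μ = ℋ^s⌊C. Let K_ω be an s-homogeneous kernel, let w be a nonempty finite word, and let x ∈ C satisfy S_w(x) = x. Then for every k ∈ ℕ, ∫_{C_{w^k}∖C_{w^{k+1}}} K_ω(x,y) dμ(y) = ∫_{C∖C_w} K_ω(x,y) dμ(y), where w^k denotes the concatenation of k copies of w. -/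
open MeasureTheory Metric Set
open scoped ENNReal NNReal

/-- The concatenation `w^k` of `k` copies of the word `w`. -/
def wordPow {ι : Type*} (w : List ι) (k : ℕ) : List ι :=
  (List.replicate k w).flatten

/-- The `s`-homogeneous kernel `K_ω(x,y) = ω(x⁻¹·y) / d(x,y)^s`. -/
noncomputable def homKer {G : Type*} [MetricSpace G] [Group G] (ω : G → ℝ) (s : ℝ)
    (x y : G) : ℝ :=
  ω (x⁻¹ * y) / dist x y ^ s

/-! Since `S_w` is a similarity `y ↦ Q · δ_ρ(y)` fixing `x`, it maps the annulus
`C_{w^k} ∖ C_{w^{k+1}}` onto `C_{w^{k+1}} ∖ C_{w^{k+2}}`. It multiplies `ℋ^s` by `ρ^s`, while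
`K_ω(x, S_w y) = ρ^{-s} K_ω(x, y)` because `S_w` fixes `x` and `ω` is invariant under dilations;
the two factors cancel, so the integral over the annuli does not depend on `k`. -/

theorem Dilation.hausdorffMeasure_image {X Y F : Type*} [EMetricSpace X] [EMetricSpace Y]
    [MeasurableSpace X] [BorelSpace X] [MeasurableSpace Y] [BorelSpace Y]
    [FunLike F X Y] [DilationClass F X Y] (f : F) {d : ℝ} (hd : 0 ≤ d) (E : Set X) :
    μH[d] (f '' E) = (Dilation.ratio f : ℝ≥0∞) ^ d * μH[d] E := by
  refine le_antisymm ((Dilation.lipschitz f).hausdorffMeasure_image_le hd E) ?_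
  have h := (Dilation.antilipschitz f).le_hausdorffMeasure_image hd E
  rw [ENNReal.coe_inv (Dilation.ratio_ne_zero f), ENNReal.inv_rpow] at h
  rwa [ENNReal.mul_le_iff_le_inv (by simp [Dilation.ratio_ne_zero]) (by simp [hd])]

theorem DilationEquiv.measurePreserving_hausdorffMeasure {X Y : Type*} [EMetricSpace X]
    [EMetricSpace Y] [MeasurableSpace X] [BorelSpace X] [MeasurableSpace Y] [BorelSpace Y]
    (e : X ≃ᵈ Y) {d : ℝ} (hd : 0 ≤ d) :
    MeasurePreserving e ((Dilation.ratio e : ℝ≥0∞) ^ d • μH[d]) μH[d] := by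
  have he : Measurable e := e.toHomeomorph.measurable
  refine ⟨he, Measure.ext fun E hE => ?_⟩
  rw [Measure.map_apply he hE, Measure.smul_apply, smul_eq_mul,
    ← Dilation.hausdorffMeasure_image e hd, image_preimage_eq E e.surjective]

theorem DilationEquiv.setIntegral_image_hausdorffMeasure {X E : Type*} [EMetricSpace X]
    [MeasurableSpace X] [BorelSpace X] [NormedAddCommGroup E] [NormedSpace ℝ E]
    (e : X ≃ᵈ X) {d : ℝ} (hd : 0 ≤ d) (g : X → E) (A : Set X) :
    ∫ y in e '' A, g y ∂μH[d] = ((Dilation.ratio e : ℝ) ^ d) • ∫ x in A, g (e x) ∂μH[d] := by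
  rw [(e.measurePreserving_hausdorffMeasure hd).setIntegral_image_emb
    e.toHomeomorph.measurableEmbedding, Measure.restrict_smul, integral_smul_measure]
  congr 1
  simp [← ENNReal.toReal_rpow]

section Words

variable {X ι : Type*} (S : ι → X → X)

theorem wordMap_append (u v : List ι) : wordMap S (u ++ v) = wordMap S u ∘ wordMap S v := by
  induction u with
  | nil => rfl
  | cons i u ih => simp only [List.cons_append, wordMap, ih, Function.comp_assoc]

theorem wordPow_succ (w : List ι) (k : ℕ) : wordPow w (k + 1) = w ++ wordPow w k := by
  simp [wordPow, List.replicate_succ]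

theorem wordMap_wordPow_succ (w : List ι) (k : ℕ) :
    wordMap S (wordPow w (k + 1)) = wordMap S w ∘ wordMap S (wordPow w k) := by
  rw [wordPow_succ, wordMap_append]

theorem wordMap_image_subset {C : Set X} (hC : ∀ i, S i '' C ⊆ C) (u : List ι) :
    wordMap S u '' C ⊆ C := by
  induction u with
  | nil => simp [wordMap]
  | cons i u ih =>
    rw [wordMap, image_comp]
    exact (image_mono ih).trans (hC i)

def wordAnnulus (C : Set X) (w : List ι) (k : ℕ) : Set X :=
  wordMap S (wordPow w k) '' C \ wordMap S (wordPow w (k + 1)) '' C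

theorem wordAnnulus_zero (C : Set X) (w : List ι) :
    wordAnnulus S C w 0 = C \ wordMap S w '' C := by
  simp [wordAnnulus, wordPow, wordMap]

theorem wordAnnulus_succ {w : List ι} (hw : Function.Injective (wordMap S w)) (C : Set X)
    (k : ℕ) : wordAnnulus S C w (k + 1) = wordMap S w '' wordAnnulus S C w k := by
  rw [wordAnnulus, wordAnnulus, image_sdiff hw, ← image_comp, ← image_comp,
    ← wordMap_wordPow_succ, ← wordMap_wordPow_succ]

end Words

namespace Dilations

variable {G : Type*} [MetricSpace G] [Group G] (D : Dilations G)

theorem map_inv {r : ℝ} (hr : 0 < r) (x : G) : D.δ r x⁻¹ = (D.δ r x)⁻¹ :=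
  _root_.map_inv (MonoidHom.mk' (D.δ r) (D.map_mul r hr)) x

theorem δ_inv_δ {r : ℝ} (hr : 0 < r) (x : G) : D.δ r⁻¹ (D.δ r x) = x := by
  rw [← Function.comp_apply (f := D.δ r⁻¹), ← D.comp _ _ (inv_pos.2 hr) hr,
    inv_mul_cancel₀ hr.ne', D.map_one', id]

theorem δ_δ_inv {r : ℝ} (hr : 0 < r) (x : G) : D.δ r (D.δ r⁻¹ x) = x := by
  rw [← Function.comp_apply (f := D.δ r), ← D.comp _ _ hr (inv_pos.2 hr),
    mul_inv_cancel₀ hr.ne', D.map_one', id]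

noncomputable def similarity (hleft : ∀ q : G, Isometry fun x : G => q * x) (Q : G) {ρ : ℝ}
    (hρ : 0 < ρ) : G ≃ᵈ G where
  toFun y := Q * D.δ ρ y
  invFun y := D.δ ρ⁻¹ (Q⁻¹ * y)
  left_inv y := by simp only [inv_mul_cancel_left, D.δ_inv_δ hρ]
  right_inv y := by simp only [D.δ_δ_inv hρ, mul_inv_cancel_left]
  edist_eq' := ⟨ρ.toNNReal, (Real.toNNReal_pos.2 hρ).ne', fun a b => by
    rw [(hleft Q).edist_eq, edist_dist, edist_dist, D.dist_eq ρ hρ, ENNReal.ofReal_mul hρ.le]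
    rfl⟩

variable {D} {hleft : ∀ q : G, Isometry fun x : G => q * x}

@[simp]
theorem similarity_apply (Q : G) {ρ : ℝ} (hρ : 0 < ρ) (y : G) :
    D.similarity hleft Q hρ y = Q * D.δ ρ y := rfl

theorem similarity_mul (Q Q' : G) {ρ ρ' : ℝ} (hρ : 0 < ρ) (hρ' : 0 < ρ') :
    D.similarity hleft Q hρ * D.similarity hleft Q' hρ' =
      D.similarity hleft (Q * D.δ ρ Q') (mul_pos hρ hρ') := by
  ext y
  simp only [DilationEquiv.coe_mul, Function.comp_apply, similarity_apply, D.map_mul ρ hρ,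
    D.comp ρ ρ' hρ hρ', mul_assoc]

theorem inv_mul_similarity_apply (Q : G) {ρ : ℝ} (hρ : 0 < ρ) (x z : G) :
    (D.similarity hleft Q hρ x)⁻¹ * D.similarity hleft Q hρ z = D.δ ρ (x⁻¹ * z) := by
  simp only [similarity_apply, mul_inv_rev, mul_assoc, inv_mul_cancel_left, D.map_mul ρ hρ,
    D.map_inv hρ]

theorem homKer_similarity_apply {ω : G → ℝ} {s : ℝ}
    (hωh : ∀ x : G, x ≠ 1 → ∀ ρ : ℝ, 0 < ρ → ω (D.δ ρ x) = ω x) (hs : s ≠ 0)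
    {Q x : G} {ρ : ℝ} (hρ : 0 < ρ) (hx : D.similarity hleft Q hρ x = x) (z : G) :
    homKer ω s x (D.similarity hleft Q hρ z) =
      ((Dilation.ratio (D.similarity hleft Q hρ) : ℝ) ^ s)⁻¹ * homKer ω s x z := by
  set e := D.similarity hleft Q hρ
  -- at `z = x` both sides vanish, since `dist x x ^ s = 0` and division by zero gives `0`
  rcases eq_or_ne z x with rfl | hzx
  · simp [homKer, hx, Real.zero_rpow hs]
  have hω : ω (x⁻¹ * e z) = ω (x⁻¹ * z) := by
    conv_lhs => rw [← hx]
    rw [inv_mul_similarity_apply, hωh _ (by rwa [ne_eq, inv_mul_eq_one, eq_comm]) ρ hρ]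
  have hdist : dist x (e z) = Dilation.ratio e * dist x z := by
    conv_lhs => rw [← hx]
    exact Dilation.dist_eq e x z
  rw [homKer, homKer, hω, hdist, Real.mul_rpow NNReal.zero_le_coe dist_nonneg, mul_comm,
    ← div_div, div_eq_inv_mul]

theorem setIntegral_homKer_image_similarity [MeasurableSpace G] [BorelSpace G] {ω : G → ℝ}
    {s : ℝ} (hωh : ∀ x : G, x ≠ 1 → ∀ ρ : ℝ, 0 < ρ → ω (D.δ ρ x) = ω x) (hs : 0 < s)
    {Q x : G} {ρ : ℝ} (hρ : 0 < ρ) (hx : D.similarity hleft Q hρ x = x) (A : Set G) :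
    ∫ y in D.similarity hleft Q hρ '' A, homKer ω s x y ∂μH[s] =
      ∫ y in A, homKer ω s x y ∂μH[s] := by
  have hratio : (Dilation.ratio (D.similarity hleft Q hρ) : ℝ) ^ s ≠ 0 :=
    (Real.rpow_pos_of_pos (Dilation.ratio_pos _) s).ne'
  simp only [DilationEquiv.setIntegral_image_hausdorffMeasure _ hs.le, smul_eq_mul,
    homKer_similarity_apply hωh hs.ne' hρ hx, integral_const_mul, mul_inv_cancel_left₀ hratio]

theorem exists_wordMap_eq_similarity (D : Dilations G)
    (hleft : ∀ q : G, Isometry fun x : G => q * x) {ι : Type*}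
    {S : ι → G → G} {q : ι → G} {r : ι → ℝ} (hr : ∀ i, 0 < r i)
    (hS : ∀ i x, S i x = q i * D.δ (r i) x) (u : List ι) :
    ∃ (Q : G) (ρ : ℝ) (hρ : 0 < ρ), wordMap S u = D.similarity hleft Q hρ := by
  induction u with
  | nil => exact ⟨1, 1, one_pos, funext fun y => by simp [wordMap, D.map_one']⟩
  | cons i u ih =>
    obtain ⟨Q, ρ, hρ, hu⟩ := ih
    refine ⟨q i * D.δ (r i) Q, _, mul_pos (hr i) hρ, ?_⟩
    rw [← similarity_mul (q i) Q (hr i) hρ, DilationEquiv.coe_mul, wordMap, hu]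
    exact congrArg (· ∘ _) (funext (hS i))

end Dilations

theorem stmt2_general {G : Type*} [MetricSpace G] [Group G]
    [MeasurableSpace G] [BorelSpace G]
    (hleft : ∀ q : G, Isometry fun x : G => q * x)
    (D : Dilations G)
    {N : ℕ} (q : Fin N → G) (r : Fin N → ℝ)
    (hr : ∀ i, r i ∈ Set.Ioo (0 : ℝ) 1)
    (S : Fin N → G → G) (hS : ∀ i x, S i x = q i * D.δ (r i) x)
    (C : Set G)
    (hCinv : C = ⋃ i, S i '' C)
    {s : ℝ} (hs : 0 < s)
    (μ : Measure G) (hμ : μ = μH[s].restrict C)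
    (ω : G → ℝ)
    (hωh : ∀ x : G, x ≠ 1 → ∀ ρ : ℝ, 0 < ρ → ω (D.δ ρ x) = ω x)
    (w : List (Fin N))
    (x : G) (hfix : wordMap S w x = x) :
    ∀ k : ℕ,
      ∫ y in (wordMap S (wordPow w k) '' C) \ (wordMap S (wordPow w (k + 1)) '' C),
          homKer ω s x y ∂μ
        = ∫ y in C \ wordMap S w '' C, homKer ω s x y ∂μ := by
  obtain ⟨Q, ρ, hρ, hw⟩ := D.exists_wordMap_eq_similarity hleft (fun i => (hr i).1) hS w
  have hSC : ∀ i, S i '' C ⊆ C := fun i => (subset_iUnion _ i).trans hCinv.superset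
  have hμ_annulus (k : ℕ) :
      ∫ y in wordAnnulus S C w k, homKer ω s x y ∂μ =
        ∫ y in wordAnnulus S C w k, homKer ω s x y ∂μH[s] := by
    have hsub : wordAnnulus S C w k ⊆ C := sdiff_subset.trans (wordMap_image_subset S hSC _)
    rw [hμ, Measure.restrict_restrict_of_subset hsub]
  intro k
  rw [← wordAnnulus_zero]
  change ∫ y in wordAnnulus S C w k, _ ∂μ = _
  induction k with
  | zero => rfl
  | succ k ih =>
    rw [← ih, hμ_annulus, hμ_annulus, wordAnnulus_succ S (hw ▸ DilationEquiv.injective _), hw,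
      Dilations.setIntegral_homKer_image_similarity hωh hs hρ (hw ▸ hfix)]

/-- **Theorem (self-similarity of annular integrals).** With `μ = ℋ^s⌊C` and a fixed point
`x = S_w(x)` of an iterated similarity, for every `k ∈ ℕ`,
`∫_{C_{w^k}∖C_{w^{k+1}}} K_ω(x,y) dμ(y) = ∫_{C∖C_w} K_ω(x,y) dμ(y)`. -/
theorem stmt2 {G : Type*} [MetricSpace G] [Group G] [CompleteSpace G]
    [TopologicalSpace.SeparableSpace G] [MeasurableSpace G] [BorelSpace G]
    (hleft : ∀ q : G, Isometry fun x : G => q * x)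
    (D : Dilations G)
    {N : ℕ} (hN : 2 ≤ N) (q : Fin N → G) (r : Fin N → ℝ)
    (hr : ∀ i, r i ∈ Set.Ioo (0 : ℝ) 1)
    (S : Fin N → G → G) (hS : ∀ i x, S i x = q i * D.δ (r i) x)
    (C : Set G) (hCc : IsCompact C) (hCne : C.Nonempty)
    (hCinv : C = ⋃ i, S i '' C)
    (hsep : Pairwise fun i j => Disjoint (S i '' C) (S j '' C))
    {s : ℝ} (hs : 0 < s) (hC0 : 0 < μH[s] C) (hC1 : μH[s] C < ⊤)
    (μ : Measure G) (hμ : μ = μH[s].restrict C)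
    (ω : G → ℝ) (hωc : ContinuousOn ω {x : G | x ≠ 1})
    (hωh : ∀ x : G, x ≠ 1 → ∀ ρ : ℝ, 0 < ρ → ω (D.δ ρ x) = ω x)
    (w : List (Fin N)) (hw : w ≠ [])
    (x : G) (hx : x ∈ C) (hfix : wordMap S w x = x) :
    ∀ k : ℕ,
      ∫ y in (wordMap S (wordPow w k) '' C) \ (wordMap S (wordPow w (k + 1)) '' C),
          homKer ω s x y ∂μ
        = ∫ y in C \ wordMap S w '' C, homKer ω s x y ∂μ :=
  stmt2_general hleft D q r hr S hS C hCinv hs μ hμ ω hωh w x hfix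
end

section
/- Let σ be a finite signed Borel measure on ℍⁿ and A_σ > 0 a constant such that |σ|(B(p,r)) ≤ A_σ r^{Q−1} for all p ∈ ℍⁿ and r > 0. Then there is a constant A, depending only on n and A_σ, such that for every p ∈ ℍⁿ, every ε > 0 and every z ∈ B(p, ε/2): ∫_{ℍⁿ∖B(p,ε)} |K(q^{-1}·p) − K(q^{-1}·z)| d|σ|(q) ≤ A. -/
open MeasureTheory Metric Set
open scoped ENNReal NNReal

/-- The Heisenberg group `ℍⁿ = ℝ^{2n+1}`, with horizontal coordinates
`a = (p_1,…,p_n)`, `b = (p_{n+1},…,p_{2n})` and vertical coordinate `t = p_{2n+1}`. -/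
@[ext] structure Heis (n : ℕ) where
  a : Fin n → ℝ
  b : Fin n → ℝ
  t : ℝ

namespace Heis

variable {n : ℕ}

/-- The symplectic form `Σ (p_i q_{i+n} − p_{i+n} q_i)`. -/
def symp (p q : Heis n) : ℝ := ∑ i, (p.a i * q.b i - p.b i * q.a i)

/-- Heisenberg group product. -/
instance : Mul (Heis n) :=
  ⟨fun p q => ⟨p.a + q.a, p.b + q.b, p.t + q.t - 2 * symp p q⟩⟩

instance : One (Heis n) := ⟨⟨0, 0, 0⟩⟩

instance : Inv (Heis n) := ⟨fun p => ⟨-p.a, -p.b, -p.t⟩⟩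

/-- `|p'|²`, the squared Euclidean norm of the horizontal part. -/
def hsq (p : Heis n) : ℝ := ∑ i, p.a i ^ 2 + ∑ i, p.b i ^ 2

/-- The Korányi norm `‖p‖ = (|p'|⁴ + p_{2n+1}²)^{1/4}`. -/
noncomputable def knorm (p : Heis n) : ℝ := (hsq p ^ 2 + p.t ^ 2) ^ ((1 : ℝ) / 4)

/-- The left-invariant Korányi distance `d(p,q) = ‖p⁻¹·q‖`. -/
noncomputable def hdist (p q : Heis n) : ℝ := knorm (p⁻¹ * q)

/-- The dilations `δ_r(p) = (r p₁, …, r p_{2n}, r² p_{2n+1})`. -/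
def dil (r : ℝ) (p : Heis n) : Heis n := ⟨r • p.a, r • p.b, r ^ 2 * p.t⟩

/-- Identification of `ℝ^{2n+1}` (as a product of standard spaces) with `Heis n`. -/
def toHeis (x : ((Fin n → ℝ) × (Fin n → ℝ)) × ℝ) : Heis n := ⟨x.1.1, x.1.2, x.2⟩

/-- Partial derivative in the direction of the coordinate `a i`. -/
noncomputable def pa (f : Heis n → ℝ) (i : Fin n) (p : Heis n) : ℝ :=
  deriv (fun s : ℝ => f ⟨Function.update p.a i s, p.b, p.t⟩) (p.a i)

/-- Partial derivative in the direction of the coordinate `b i`. -/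
noncomputable def pb (f : Heis n → ℝ) (i : Fin n) (p : Heis n) : ℝ :=
  deriv (fun s : ℝ => f ⟨p.a, Function.update p.b i s, p.t⟩) (p.b i)

/-- Partial derivative in the vertical direction. -/
noncomputable def pt (f : Heis n → ℝ) (p : Heis n) : ℝ :=
  deriv (fun s : ℝ => f ⟨p.a, p.b, s⟩) p.t

/-- The horizontal vector field `X_i = ∂_i + 2 x_{i+n} ∂_{2n+1}` applied to `f`. -/
noncomputable def Xd (f : Heis n → ℝ) (i : Fin n) (p : Heis n) : ℝ :=
  pa f i p + 2 * p.b i * pt f p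

/-- The horizontal vector field `Y_i = ∂_{i+n} − 2 x_i ∂_{2n+1}` applied to `f`. -/
noncomputable def Yd (f : Heis n → ℝ) (i : Fin n) (p : Heis n) : ℝ :=
  pb f i p - 2 * p.a i * pt f p

/-- The Euclidean norm `|∇_H f(p)|` of the horizontal gradient. -/
noncomputable def gradNorm (f : Heis n → ℝ) (p : Heis n) : ℝ :=
  Real.sqrt (∑ i, Xd f i p ^ 2 + ∑ i, Yd f i p ^ 2)

/-- The sub-Laplacian `Δ_H = Σ (X_i² + Y_i²)`. -/
noncomputable def subLap (f : Heis n → ℝ) (p : Heis n) : ℝ :=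
  ∑ i, (Xd (fun y => Xd f i y) i p + Yd (fun y => Yd f i y) i p)

/-- `C^k` smoothness of `f` on `U ⊆ Heis n`, via the identification with `ℝ^{2n+1}`. -/
def IsCk (k : ℕ∞) (f : Heis n → ℝ) (U : Set (Heis n)) : Prop :=
  ContDiffOn ℝ k (f ∘ toHeis) (toHeis ⁻¹' U)

/-- `f` is `Δ_H`-harmonic on an open set `U`: it is `C²` there and `Δ_H f = 0` on `U`. -/
def HarmonicOn (f : Heis n → ℝ) (U : Set (Heis n)) : Prop :=
  IsCk 2 f U ∧ ∀ p ∈ U, subLap f p = 0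

end Heis

namespace Heis

variable {n : ℕ}

/-- The kernel `K = ∇_H Γ`, with components
`K_i(p) = c_Q (p_i|p'|² + p_{i+n} p_{2n+1})/‖p‖^{Q+2}` (first block, `Sum.inl`) and
`K_{i+n}(p) = c_Q (p_{i+n}|p'|² − p_i p_{2n+1})/‖p‖^{Q+2}` (second block, `Sum.inr`),
where `Q = 2n+2`. -/
noncomputable def Kker (cQ : ℝ) (p : Heis n) : Fin n ⊕ Fin n → ℝ
  | Sum.inl i => cQ * (p.a i * hsq p + p.b i * p.t) / knorm p ^ (2 * n + 4)
  | Sum.inr i => cQ * (p.b i * hsq p - p.a i * p.t) / knorm p ^ (2 * n + 4)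

/-- The Euclidean norm on `ℝ^{2n}`. -/
noncomputable def eNorm (v : Fin n ⊕ Fin n → ℝ) : ℝ := Real.sqrt (∑ j, v j ^ 2)

end Heis

/-!
For `‖h‖ ≤ ‖x‖ / 2` the kernel satisfies the Hörmander-type bound
`|K(x) - K(x·h)| ≲ ‖h‖ / ‖x‖^Q`, checked here directly from the explicit formula: the numerator
`c_Q (p_i |p'|² ± p_{i∓n} p_{2n+1})` of `K` changes by `≲ ‖x‖² ‖h‖` and the denominator
`‖x‖^{Q+2}` by `≲ ‖x‖^{Q+1} ‖h‖`, the latter because the Korányi distance is a metric, so that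
`|‖x·h‖ - ‖x‖| ≤ ‖h‖`. With `x = q⁻¹·p` and `h = p⁻¹·z` the
integrand is therefore `≲ ε / d(q,p)^Q` off `B(p, ε)`. On the dyadic annulus
`2^k ε ≤ d(q,p) < 2^{k+1} ε` the growth bound `|σ|(B(p,r)) ≲ r^{Q-1}` turns this into a
contribution `≲ 2^{-k}`, and the geometric series gives a bound independent of `p`, `ε`, `z`.
-/

theorem abs_sum_le_card_mul {ι : Type*} [Fintype ι] {f : ι → ℝ} {B : ℝ} (h : ∀ i, |f i| ≤ B) :
    |∑ i, f i| ≤ Fintype.card ι * B :=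
  (Finset.abs_sum_le_sum_abs _ _).trans
    ((Finset.sum_le_card_nsmul _ _ _ fun i _ => h i).trans_eq (by simp))

theorem abs_add_sq_sub_sq_le {u v m δ : ℝ} (hu : |u| ≤ m) (hv : |v| ≤ δ) :
    |(u + v) ^ 2 - u ^ 2| ≤ δ * (2 * m + δ) :=
  calc |(u + v) ^ 2 - u ^ 2| = |v| * |2 * u + v| := by rw [← abs_mul]; ring_nf
    _ ≤ δ * (2 * m + δ) := by
        gcongr
        · exact (abs_nonneg v).trans hv
        · exact (abs_add_le _ _).trans (by rw [abs_mul, abs_two]; linarith)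

theorem abs_div_pow_sub_div_pow_le (n : ℕ) {u v m M δ c : ℝ} (hm : 0 < m) (hδ : δ ≤ m / 2)
    (hMm : |M - m| ≤ δ) (huv : |u - v| ≤ c * m ^ 2 * δ) (hv : |v| ≤ 2 * M ^ 3) :
    |u / m ^ (2 * n + 4) - v / M ^ (2 * n + 4)| ≤
      (c + (2 * n + 4) * 2 ^ (4 * n + 5)) * δ / m ^ (2 * n + 2) := by
  obtain ⟨hMm₁, hMm₂⟩ := abs_le.mp hMm
  have hδ₀ : 0 ≤ δ := (abs_nonneg _).trans hMm
  have hM : m / 2 ≤ M := by linarith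
  have hM₀ : 0 < M := by linarith
  have hpow :
      |M ^ (2 * n + 4) - m ^ (2 * n + 4)| ≤ δ * (2 * n + 4) * (2 * m) ^ (2 * n + 3) := by
    refine (abs_pow_sub_pow_le ..).trans ?_
    rw [abs_of_pos hM₀, abs_of_pos hm, show 2 * n + 4 - 1 = 2 * n + 3 by omega]
    have hmax : max M m ≤ 2 * m := max_le (by linarith) (by linarith)
    push_cast
    gcongr
  have hsplit : u / m ^ (2 * n + 4) - v / M ^ (2 * n + 4) = (u - v) / m ^ (2 * n + 4) +
      v / M ^ 3 * ((M ^ (2 * n + 4) - m ^ (2 * n + 4)) / (m ^ (2 * n + 4) * M ^ (2 * n + 1))) := by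
    field_simp
    ring
  have huv' : |(u - v) / m ^ (2 * n + 4)| ≤ c * δ / m ^ (2 * n + 2) := by
    rw [abs_div, abs_of_pos (pow_pos hm _), div_le_iff₀ (pow_pos hm _)]
    exact huv.trans_eq (by field_simp; ring)
  have hv' : |v / M ^ 3| ≤ 2 := by
    rwa [abs_div, abs_of_pos (pow_pos hM₀ 3), div_le_iff₀ (pow_pos hM₀ 3)]
  have hquot : |(M ^ (2 * n + 4) - m ^ (2 * n + 4)) / (m ^ (2 * n + 4) * M ^ (2 * n + 1))| ≤
      (2 * n + 4) * 2 ^ (4 * n + 4) * δ / m ^ (2 * n + 2) := by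
    rw [abs_div, abs_of_pos (by positivity : (0 : ℝ) < m ^ (2 * n + 4) * M ^ (2 * n + 1)),
      div_le_iff₀ (by positivity)]
    calc |M ^ (2 * n + 4) - m ^ (2 * n + 4)| ≤ δ * (2 * n + 4) * (2 * m) ^ (2 * n + 3) := hpow
      _ = (2 * n + 4) * 2 ^ (4 * n + 4) * δ / m ^ (2 * n + 2) *
            (m ^ (2 * n + 4) * (m / 2) ^ (2 * n + 1)) := by
        rw [div_pow]
        field_simp
        ring
      _ ≤ (2 * n + 4) * 2 ^ (4 * n + 4) * δ / m ^ (2 * n + 2) *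
            (m ^ (2 * n + 4) * M ^ (2 * n + 1)) := by gcongr
  calc |u / m ^ (2 * n + 4) - v / M ^ (2 * n + 4)|
      ≤ |(u - v) / m ^ (2 * n + 4)| + |v / M ^ 3| *
          |(M ^ (2 * n + 4) - m ^ (2 * n + 4)) / (m ^ (2 * n + 4) * M ^ (2 * n + 1))| := by
        rw [hsplit, ← abs_mul]
        exact abs_add_le _ _
    _ ≤ c * δ / m ^ (2 * n + 2) +
          2 * ((2 * n + 4) * 2 ^ (4 * n + 4) * δ / m ^ (2 * n + 2)) := by
        gcongr
    _ = (c + (2 * n + 4) * 2 ^ (4 * n + 5)) * δ / m ^ (2 * n + 2) := by ring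

theorem compl_closedBall_subset_iUnion_annulus {X : Type*} [PseudoMetricSpace X] (p : X)
    {ε : ℝ} (hε : 0 < ε) :
    (closedBall p ε)ᶜ ⊆ ⋃ k : ℕ, ball p (2 ^ (k + 1) * ε) \ ball p (2 ^ k * ε) := by
  intro q hq
  have hq : 1 ≤ dist q p / ε := by
    rw [le_div_iff₀ hε, one_mul]
    exact (not_le.mp (mt mem_closedBall.mpr hq)).le
  obtain ⟨k, hk, hk'⟩ := exists_nat_pow_near hq one_lt_two
  rw [le_div_iff₀ hε] at hk
  rw [div_lt_iff₀ hε] at hk'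
  exact mem_iUnion.mpr ⟨k, hk', not_lt.mpr hk⟩

theorem lintegral_compl_closedBall_le_of_growth {X : Type*} [PseudoMetricSpace X]
    [MeasurableSpace X] [OpensMeasurableSpace X] (μ : Measure X) {p : X} {s : ℕ} {C D ε : ℝ}
    (hC : 0 ≤ C) (hD : 0 ≤ D) (hε : 0 < ε)
    (hμ : ∀ r, 0 < r → μ (closedBall p r) ≤ ENNReal.ofReal (C * r ^ s))
    {f : X → ℝ≥0∞}
    (hf : ∀ q, ε ≤ dist q p → f q ≤ ENNReal.ofReal (D * ε / dist q p ^ (s + 1))) :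
    ∫⁻ q in (closedBall p ε)ᶜ, f q ∂μ ≤ ENNReal.ofReal (2 ^ (s + 1) * C * D) := by
  set a : ℝ := 2 ^ (s + 1) * C * D
  have hannulus : ∀ k : ℕ,
      ∫⁻ q in ball p (2 ^ (k + 1) * ε) \ ball p (2 ^ k * ε), f q ∂μ ≤
        ENNReal.ofReal (a / 2 / 2 ^ k) := by
    intro k
    have hf' : ∀ q ∈ ball p (2 ^ (k + 1) * ε) \ ball p (2 ^ k * ε),
        f q ≤ ENNReal.ofReal (D * ε / (2 ^ k * ε) ^ (s + 1)) := by
      rintro q ⟨-, hq⟩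
      have hq : 2 ^ k * ε ≤ dist q p := not_lt.mp hq
      refine (hf q ((le_mul_of_one_le_left hε.le (one_le_pow₀ one_le_two)).trans hq)).trans ?_
      gcongr
    calc ∫⁻ q in ball p (2 ^ (k + 1) * ε) \ ball p (2 ^ k * ε), f q ∂μ
        ≤ ENNReal.ofReal (D * ε / (2 ^ k * ε) ^ (s + 1)) *
            μ (ball p (2 ^ (k + 1) * ε) \ ball p (2 ^ k * ε)) :=
          (setLIntegral_mono' (measurableSet_ball.diff measurableSet_ball) hf').trans_eq
            (setLIntegral_const _ _)
      _ ≤ ENNReal.ofReal (D * ε / (2 ^ k * ε) ^ (s + 1)) *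
            ENNReal.ofReal (C * (2 ^ (k + 1) * ε) ^ s) := by
          gcongr
          exact (measure_mono (sdiff_subset.trans ball_subset_closedBall)).trans
            (hμ _ (by positivity))
      _ = ENNReal.ofReal (a / 2 / 2 ^ k) := by
          rw [← ENNReal.ofReal_mul (by positivity)]
          congr 1
          field_simp
          ring
  calc ∫⁻ q in (closedBall p ε)ᶜ, f q ∂μ
      ≤ ∑' k : ℕ, ∫⁻ q in ball p (2 ^ (k + 1) * ε) \ ball p (2 ^ k * ε), f q ∂μ :=
        (lintegral_mono_set (compl_closedBall_subset_iUnion_annulus p hε)).trans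
          (lintegral_iUnion_le _ _)
    _ ≤ ∑' k : ℕ, ENNReal.ofReal (a / 2 / 2 ^ k) := ENNReal.tsum_le_tsum hannulus
    _ = ENNReal.ofReal a := by
        rw [← ENNReal.ofReal_tsum_of_nonneg (fun k => by positivity) (summable_geometric_two' a),
          tsum_geometric_two']

namespace Heis

variable {n : ℕ}

@[simp] theorem mul_a (p q : Heis n) : (p * q).a = p.a + q.a := rfl
@[simp] theorem mul_b (p q : Heis n) : (p * q).b = p.b + q.b := rfl
@[simp] theorem mul_t (p q : Heis n) : (p * q).t = p.t + q.t - 2 * symp p q := rfl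
@[simp] theorem inv_a (p : Heis n) : p⁻¹.a = -p.a := rfl
@[simp] theorem inv_b (p : Heis n) : p⁻¹.b = -p.b := rfl
@[simp] theorem inv_t (p : Heis n) : p⁻¹.t = -p.t := rfl
@[simp] theorem one_a : (1 : Heis n).a = 0 := rfl
@[simp] theorem one_b : (1 : Heis n).b = 0 := rfl
@[simp] theorem one_t : (1 : Heis n).t = 0 := rfl

theorem symp_mul_left (p q r : Heis n) : symp (p * q) r = symp p r + symp q r := by
  simp only [symp, mul_a, mul_b, Pi.add_apply, ← Finset.sum_add_distrib]
  exact Finset.sum_congr rfl fun i _ => by ring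

theorem symp_mul_right (p q r : Heis n) : symp p (q * r) = symp p q + symp p r := by
  simp only [symp, mul_a, mul_b, Pi.add_apply, ← Finset.sum_add_distrib]
  exact Finset.sum_congr rfl fun i _ => by ring

@[simp] theorem symp_inv_self (p : Heis n) : symp p⁻¹ p = 0 :=
  Finset.sum_eq_zero fun i _ => by simp only [inv_a, inv_b, Pi.neg_apply]; ring

instance : Group (Heis n) where
  mul_assoc p q r := by
    ext <;> simp only [mul_a, mul_b, mul_t, symp_mul_left, symp_mul_right, add_assoc]; ring
  one_mul p := by ext <;> simp [symp]
  mul_one p := by ext <;> simp [symp]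
  inv_mul_cancel p := by ext <;> simp

theorem hsq_nonneg (p : Heis n) : 0 ≤ hsq p := by
  unfold hsq; positivity

theorem knorm_nonneg (p : Heis n) : 0 ≤ knorm p := Real.rpow_nonneg (by positivity) _

theorem knorm_sq_sq (p : Heis n) : (knorm p ^ 2) ^ 2 = hsq p ^ 2 + p.t ^ 2 := by
  rw [← pow_mul, knorm, ← Real.rpow_natCast, ← Real.rpow_mul (by positivity)]
  norm_num

theorem hsq_le_knorm_sq (p : Heis n) : hsq p ≤ knorm p ^ 2 :=
  (le_abs_self _).trans <| abs_le_of_sq_le_sq (by nlinarith [knorm_sq_sq p]) (by positivity)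

theorem abs_t_le_knorm_sq (p : Heis n) : |p.t| ≤ knorm p ^ 2 :=
  abs_le_of_sq_le_sq (by nlinarith [knorm_sq_sq p]) (by positivity)

theorem abs_a_le_knorm (p : Heis n) (i : Fin n) : |p.a i| ≤ knorm p := by
  refine abs_le_of_sq_le_sq (le_trans ?_ (hsq_le_knorm_sq p)) (knorm_nonneg p)
  exact le_add_of_le_of_nonneg
    (Finset.single_le_sum (f := fun j => p.a j ^ 2) (fun j _ => sq_nonneg _) (Finset.mem_univ i))
    (by positivity)

theorem abs_b_le_knorm (p : Heis n) (i : Fin n) : |p.b i| ≤ knorm p := by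
  refine abs_le_of_sq_le_sq (le_trans ?_ (hsq_le_knorm_sq p)) (knorm_nonneg p)
  exact le_add_of_nonneg_of_le (by positivity)
    (Finset.single_le_sum (f := fun j => p.b j ^ 2) (fun j _ => sq_nonneg _) (Finset.mem_univ i))

theorem abs_symp_le (p q : Heis n) : |symp p q| ≤ 2 * n * knorm p * knorm q := by
  have hterm : ∀ i, |p.a i * q.b i - p.b i * q.a i| ≤ 2 * knorm p * knorm q := fun i =>
    calc |p.a i * q.b i - p.b i * q.a i| ≤ |p.a i| * |q.b i| + |p.b i| * |q.a i| := by
          rw [← abs_mul, ← abs_mul]; exact abs_sub _ _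
      _ ≤ knorm p * knorm q + knorm p * knorm q :=
          add_le_add
            (mul_le_mul (abs_a_le_knorm p i) (abs_b_le_knorm q i) (abs_nonneg _) (knorm_nonneg p))
            (mul_le_mul (abs_b_le_knorm p i) (abs_a_le_knorm q i) (abs_nonneg _) (knorm_nonneg p))
      _ = 2 * knorm p * knorm q := by ring
  calc |symp p q| ≤ n * (2 * knorm p * knorm q) := by
        simpa only [symp, Fintype.card_fin] using abs_sum_le_card_mul hterm
    _ = 2 * n * knorm p * knorm q := by ring

theorem abs_t_mul_sub_le (p h : Heis n) :
    |(p * h).t - p.t| ≤ knorm h ^ 2 + 4 * n * knorm p * knorm h :=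
  calc |(p * h).t - p.t| = |h.t - 2 * symp p h| := by rw [mul_t]; ring_nf
    _ ≤ |h.t| + 2 * |symp p h| := by
        refine (abs_sub _ _).trans ?_
        rw [abs_mul, abs_two]
    _ ≤ knorm h ^ 2 + 2 * (2 * n * knorm p * knorm h) := by
        gcongr
        exacts [abs_t_le_knorm_sq h, abs_symp_le p h]
    _ = _ := by ring

theorem abs_hsq_mul_sub_le (p h : Heis n) :
    |hsq (p * h) - hsq p| ≤ 2 * n * (knorm h * (2 * knorm p + knorm h)) := by
  have hsplit : hsq (p * h) - hsq p =
      ∑ i, ((p.a i + h.a i) ^ 2 - p.a i ^ 2) + ∑ i, ((p.b i + h.b i) ^ 2 - p.b i ^ 2) := by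
    simp only [hsq, mul_a, mul_b, Pi.add_apply, Finset.sum_sub_distrib]; ring
  have ha := abs_sum_le_card_mul fun i =>
    abs_add_sq_sub_sq_le (abs_a_le_knorm p i) (abs_a_le_knorm h i)
  have hb := abs_sum_le_card_mul fun i =>
    abs_add_sq_sub_sq_le (abs_b_le_knorm p i) (abs_b_le_knorm h i)
  simp only [Fintype.card_fin] at ha hb
  rw [hsplit]
  linarith [abs_add_le (∑ i, ((p.a i + h.a i) ^ 2 - p.a i ^ 2))
    (∑ i, ((p.b i + h.b i) ^ 2 - p.b i ^ 2))]

def horiz : Fin n ⊕ Fin n → Heis n → ℝ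
  | Sum.inl i, p => p.a i
  | Sum.inr i, p => p.b i

/-- `horiz` followed by the rotation `(a, b) ↦ (b, -a)`; with it both blocks of `Kker` are
`c_Q · kerNum j p / ‖p‖^{Q+2}`. -/
def horizJ : Fin n ⊕ Fin n → Heis n → ℝ
  | Sum.inl i, p => p.b i
  | Sum.inr i, p => -p.a i

theorem horiz_mul (j : Fin n ⊕ Fin n) (p q : Heis n) :
    horiz j (p * q) = horiz j p + horiz j q := by
  cases j <;> rfl

theorem horizJ_mul (j : Fin n ⊕ Fin n) (p q : Heis n) :
    horizJ j (p * q) = horizJ j p + horizJ j q := by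
  cases j
  · rfl
  · simp only [horizJ, mul_a, Pi.add_apply]; ring

theorem abs_horiz_le (j : Fin n ⊕ Fin n) (p : Heis n) : |horiz j p| ≤ knorm p := by
  cases j
  · exact abs_a_le_knorm p _
  · exact abs_b_le_knorm p _

theorem abs_horizJ_le (j : Fin n ⊕ Fin n) (p : Heis n) : |horizJ j p| ≤ knorm p := by
  cases j
  · exact abs_b_le_knorm p _
  · exact (abs_neg _).trans_le (abs_a_le_knorm p _)

def kerNum (j : Fin n ⊕ Fin n) (p : Heis n) : ℝ := horiz j p * hsq p + horizJ j p * p.t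

theorem Kker_apply (cQ : ℝ) (p : Heis n) (j : Fin n ⊕ Fin n) :
    Kker cQ p j = cQ * kerNum j p / knorm p ^ (2 * n + 4) := by
  cases j
  · rfl
  · simp only [Kker, kerNum, horiz, horizJ]; ring

theorem abs_hsq_le_knorm_sq (p : Heis n) : |hsq p| ≤ knorm p ^ 2 :=
  (abs_of_nonneg (hsq_nonneg p)).trans_le (hsq_le_knorm_sq p)

theorem abs_kerNum_le (j : Fin n ⊕ Fin n) (p : Heis n) : |kerNum j p| ≤ 2 * knorm p ^ 3 := by
  have := knorm_nonneg p
  have := abs_horiz_le j p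
  have := abs_horizJ_le j p
  have := abs_hsq_le_knorm_sq p
  have := abs_t_le_knorm_sq p
  calc |kerNum j p| ≤ |horiz j p| * |hsq p| + |horizJ j p| * |p.t| := by
        simp only [kerNum, ← abs_mul]
        exact abs_add_le _ _
    _ ≤ knorm p * knorm p ^ 2 + knorm p * knorm p ^ 2 := by gcongr
    _ = 2 * knorm p ^ 3 := by ring

theorem abs_kerNum_mul_sub_le (j : Fin n ⊕ Fin n) {p h : Heis n} (hh : knorm h ≤ knorm p) :
    |kerNum j (p * h) - kerNum j p| ≤ (20 * n + 4) * knorm p ^ 2 * knorm h := by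
  have hδ : 0 ≤ knorm h := knorm_nonneg h
  have hhsq : |hsq (p * h) - hsq p| ≤ 6 * n * knorm p * knorm h :=
    (abs_hsq_mul_sub_le p h).trans
      (by nlinarith [mul_nonneg (mul_nonneg n.cast_nonneg hδ) (sub_nonneg.2 hh)])
  have ht : |(p * h).t - p.t| ≤ (4 * n + 1) * knorm p * knorm h :=
    (abs_t_mul_sub_le p h).trans (by nlinarith)
  have hα : |horiz j (p * h)| ≤ 2 * knorm p := by
    rw [horiz_mul]
    linarith [abs_add_le (horiz j p) (horiz j h), abs_horiz_le j p, abs_horiz_le j h]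
  have hβ : |horizJ j (p * h)| ≤ 2 * knorm p := by
    rw [horizJ_mul]
    linarith [abs_add_le (horizJ j p) (horizJ j h), abs_horizJ_le j p, abs_horizJ_le j h]
  have := knorm_nonneg p
  have := abs_horiz_le j h
  have := abs_horizJ_le j h
  have := abs_hsq_le_knorm_sq p
  have := abs_t_le_knorm_sq p
  calc |kerNum j (p * h) - kerNum j p|
      = |horiz j h * hsq p + horiz j (p * h) * (hsq (p * h) - hsq p) +
          (horizJ j h * p.t + horizJ j (p * h) * ((p * h).t - p.t))| := by
        simp only [kerNum, horiz_mul, horizJ_mul]; ring_nf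
    _ ≤ |horiz j h| * |hsq p| + |horiz j (p * h)| * |hsq (p * h) - hsq p| +
          (|horizJ j h| * |p.t| + |horizJ j (p * h)| * |(p * h).t - p.t|) := by
        simp only [← abs_mul]
        exact (abs_add_le _ _).trans (add_le_add (abs_add_le _ _) (abs_add_le _ _))
    _ ≤ knorm h * knorm p ^ 2 + 2 * knorm p * (6 * n * knorm p * knorm h) +
          (knorm h * knorm p ^ 2 + 2 * knorm p * ((4 * n + 1) * knorm p * knorm h)) := by
        gcongr
    _ = (20 * n + 4) * knorm p ^ 2 * knorm h := by ring

def kerLipConst (n : ℕ) : ℝ := 20 * n + 4 + (2 * n + 4) * 2 ^ (4 * n + 5)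

theorem abs_Kker_sub_Kker_mul_le (cQ : ℝ) (j : Fin n ⊕ Fin n) {p h : Heis n}
    (hp : 0 < knorm p) (hh : knorm h ≤ knorm p / 2)
    (htri : |knorm (p * h) - knorm p| ≤ knorm h) :
    |Kker cQ p j - Kker cQ (p * h) j| ≤
      |cQ| * kerLipConst n * knorm h / knorm p ^ (2 * n + 2) := by
  have hnum := abs_kerNum_mul_sub_le j (p := p) (h := h) (hh.trans (by linarith))
  rw [abs_sub_comm] at hnum
  rw [Kker_apply, Kker_apply, mul_div_assoc, mul_div_assoc, ← mul_sub, abs_mul, mul_assoc,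
    mul_div_assoc]
  gcongr
  exact abs_div_pow_sub_div_pow_le n hp hh htri hnum (abs_kerNum_le j _)

theorem eNorm_le_of_abs_le {v : Fin n ⊕ Fin n → ℝ} {B : ℝ} (h : ∀ j, |v j| ≤ B) :
    eNorm v ≤ 2 * n * B :=
  calc eNorm v ≤ ∑ j, |v j| := by
        refine Real.sqrt_le_iff.mpr ⟨by positivity, ?_⟩
        simpa only [sq_abs] using Finset.sum_sq_le_sq_sum_of_nonneg fun j _ => abs_nonneg (v j)
    _ ≤ 2 * n * B :=
        (Finset.sum_le_card_nsmul _ _ _ fun j _ => h j).trans_eq (by simp [two_mul, add_mul])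

theorem eNorm_Kker_sub_Kker_mul_le (cQ : ℝ) {p h : Heis n}
    (hp : 0 < knorm p) (hh : knorm h ≤ knorm p / 2)
    (htri : |knorm (p * h) - knorm p| ≤ knorm h) :
    eNorm (Kker cQ p - Kker cQ (p * h)) ≤
      2 * n * (|cQ| * kerLipConst n) * knorm h / knorm p ^ (2 * n + 2) := by
  refine (eNorm_le_of_abs_le fun j => abs_Kker_sub_Kker_mul_le cQ j hp hh htri).trans_eq ?_
  ring

end Heis

theorem stmt13_general (n : ℕ) [MetricSpace (Heis n)]
    (hdist_eq : ∀ p q : Heis n, dist p q = Heis.hdist p q)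
    [MeasurableSpace (Heis n)] [BorelSpace (Heis n)]
    (cQ : ℝ) (Aσ : ℝ) (hAσ : 0 < Aσ)
    (σ : MeasureTheory.SignedMeasure (Heis n))
    (hgrow : ∀ (p : Heis n) (r : ℝ), 0 < r →
      σ.totalVariation (Metric.closedBall p r) ≤ ENNReal.ofReal (Aσ * r ^ (2 * n + 1))) :
    ∃ A : ℝ, ∀ (p : Heis n) (ε : ℝ), 0 < ε → ∀ z ∈ Metric.closedBall p (ε / 2),
      ∫⁻ q in (Metric.closedBall p ε)ᶜ,
          ENNReal.ofReal
            (Heis.eNorm (Heis.Kker cQ (q⁻¹ * p) - Heis.Kker cQ (q⁻¹ * z)))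
          ∂σ.totalVariation
        ≤ ENNReal.ofReal A := by
  set C := 2 * n * (|cQ| * Heis.kerLipConst n)
  have hC : 0 ≤ C := by simp only [C, Heis.kerLipConst]; positivity
  refine ⟨2 ^ (2 * n + 2) * Aσ * (C / 2), fun p ε hε z hz => ?_⟩
  refine lintegral_compl_closedBall_le_of_growth _ hAσ.le (by positivity) hε (hgrow p)
    fun q hq => ENNReal.ofReal_le_ofReal ?_
  have hpz : dist p z ≤ ε / 2 := by rw [dist_comm]; exact mem_closedBall.mp hz
  have hsplit : q⁻¹ * z = q⁻¹ * p * (p⁻¹ * z) := by group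
  have hx : Heis.knorm (q⁻¹ * p) = dist q p := (hdist_eq q p).symm
  have hh : Heis.knorm (p⁻¹ * z) = dist p z := (hdist_eq p z).symm
  have hxh : Heis.knorm (q⁻¹ * p * (p⁻¹ * z)) = dist q z := by
    rw [← hsplit]; exact (hdist_eq q z).symm
  have htri : |dist q z - dist q p| ≤ dist p z := by
    simpa only [dist_comm] using abs_dist_sub_le z p q
  have hkernel := Heis.eNorm_Kker_sub_Kker_mul_le cQ (p := q⁻¹ * p) (h := p⁻¹ * z)
    (by rw [hx]; linarith) (by rw [hx, hh]; linarith) (by rwa [hxh, hx, hh])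
  rw [← hsplit, hx, hh] at hkernel
  calc _ ≤ C * dist p z / dist q p ^ (2 * n + 2) := hkernel
    _ ≤ C * (ε / 2) / dist q p ^ (2 * n + 2) := by gcongr
    _ = C / 2 * ε / dist q p ^ (2 * n + 1 + 1) := by ring

/-- **Theorem (Hörmander-type estimate).** If `|σ|(B(p,r)) ≤ A_σ r^{Q−1}` for all `p, r`,
then there is `A` (depending only on `n`, `c_Q` and `A_σ`) such that for every `p`, every
`ε > 0` and every `z ∈ B(p, ε/2)`:
`∫_{ℍⁿ∖B(p,ε)} |K(q⁻¹·p) − K(q⁻¹·z)| d|σ|(q) ≤ A`. -/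
theorem stmt13 (n : ℕ) (hn : 1 ≤ n) [MetricSpace (Heis n)]
    (hdist_eq : ∀ p q : Heis n, dist p q = Heis.hdist p q)
    [MeasurableSpace (Heis n)] [BorelSpace (Heis n)]
    (cQ : ℝ) (Aσ : ℝ) (hAσ : 0 < Aσ)
    (σ : MeasureTheory.SignedMeasure (Heis n))
    (hgrow : ∀ (p : Heis n) (r : ℝ), 0 < r →
      σ.totalVariation (Metric.closedBall p r) ≤ ENNReal.ofReal (Aσ * r ^ (2 * n + 1))) :
    ∃ A : ℝ, ∀ (p : Heis n) (ε : ℝ), 0 < ε → ∀ z ∈ Metric.closedBall p (ε / 2),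
      ∫⁻ q in (Metric.closedBall p ε)ᶜ,
          ENNReal.ofReal
            (Heis.eNorm (Heis.Kker cQ (q⁻¹ * p) - Heis.Kker cQ (q⁻¹ * z)))
          ∂σ.totalVariation
        ≤ ENNReal.ofReal A :=
  stmt13_general n hdist_eq cQ Aσ hAσ σ hgrow
end

section
/- Fix n ≥ 1, an even integer N ≥ 2 and 0 < r < 1/N, and let z_1,…,z_{N^{2n}} enumerate the grid {0, 1/N, …, (N−1)/N}^{2n} ⊂ ℝ^{2n}; set Q_j = z_j + r·[0,1]^{2n}. Then there exists a continuous function φ : [0,1]^{2n} → ℝ such that for every j = 1,…,N^{2n} and every w ∈ Q_j, φ(w) = r²·φ((w − z_j)/r) − 2Σ_{i=1}^n (z_{j,i} w_{i+n} − z_{j,i+n} w_i), and moreover ‖φ‖_∞ ≤ 4nr/(1 − r²). -/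
/-!
Let `D` be a continuous sawtooth with `0 ≤ D ≤ r` and `D x = x - k/N` on `[k/N, k/N + r]`.
Then `E w = D(w)/r` maps `ℝ^{2n}` continuously into the unit cube and agrees with
`w ↦ (w - z_g)/r` on `Q_g`, while `H w = 2 ω(D(w), w)`, with `ω` the standard symplectic form,
equals `-2 ω(z_g, w)` on `Q_g` because `ω(w, w) = 0`. The required identity is therefore the
fixed-point equation `φ = H + r² φ ∘ E`, solved by the uniformly convergent series
`φ = ∑ₘ r^{2m} H ∘ Eᵐ`; as `|H| ≤ 2nr` on `[0,1]^{2n}`, `|φ| ≤ 2nr/(1 - r²)` there.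
-/

open Set

section IterateSeries

variable {X : Type*} {E : X → X} {H : X → ℝ} {S : Set X} {a B : ℝ}

noncomputable def iterateSeries (E : X → X) (H : X → ℝ) (a : ℝ) (x : X) : ℝ :=
  ∑' m : ℕ, a ^ m * H (E^[m] x)

lemma norm_iterateSeries_term_le (ha0 : 0 ≤ a) (hES : ∀ x, E x ∈ S) (hHB : ∀ x ∈ S, |H x| ≤ B)
    {x : X} (hx : x ∈ S) (m : ℕ) : ‖a ^ m * H (E^[m] x)‖ ≤ a ^ m * B := by
  rw [norm_mul, Real.norm_eq_abs, abs_of_nonneg (pow_nonneg ha0 m)]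
  exact mul_le_mul_of_nonneg_left (hHB _ (MapsTo.iterate (fun y _ => hES y) m hx))
    (pow_nonneg ha0 m)

lemma summable_iterateSeries_term (ha0 : 0 ≤ a) (ha1 : a < 1) (hES : ∀ x, E x ∈ S)
    (hHB : ∀ x ∈ S, |H x| ≤ B) (x : X) : Summable fun m => a ^ m * H (E^[m] x) := by
  have hS {y : X} (hy : y ∈ S) : Summable fun m => a ^ m * H (E^[m] y) :=
    ((summable_geometric_of_lt_one ha0 ha1).mul_right B).of_norm_bounded
      (norm_iterateSeries_term_le ha0 hES hHB hy)
  rw [← summable_nat_add_iff 1]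
  -- the shifted series at `x` is `a` times the series at `E x ∈ S`
  refine ((hS (hES x)).mul_left a).congr fun m => ?_
  rw [Function.iterate_succ_apply, pow_succ]
  ring

lemma iterateSeries_eq_add (ha0 : 0 ≤ a) (ha1 : a < 1) (hES : ∀ x, E x ∈ S)
    (hHB : ∀ x ∈ S, |H x| ≤ B) (x : X) :
    iterateSeries E H a x = H x + a * iterateSeries E H a (E x) := by
  rw [iterateSeries, (summable_iterateSeries_term ha0 ha1 hES hHB x).tsum_eq_zero_add,
    iterateSeries, ← tsum_mul_left]
  simp only [pow_zero, one_mul, Function.iterate_zero_apply, Function.iterate_succ_apply,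
    pow_succ]
  congr 1
  exact tsum_congr fun m => by ring

lemma abs_iterateSeries_le (ha0 : 0 ≤ a) (ha1 : a < 1) (hES : ∀ x, E x ∈ S)
    (hHB : ∀ x ∈ S, |H x| ≤ B) {x : X} (hx : x ∈ S) :
    |iterateSeries E H a x| ≤ B / (1 - a) := by
  rw [div_eq_inv_mul]
  exact tsum_of_norm_bounded ((hasSum_geometric_of_lt_one ha0 ha1).mul_right B)
    (norm_iterateSeries_term_le ha0 hES hHB hx)

lemma continuousOn_iterateSeries [TopologicalSpace X] (ha0 : 0 ≤ a) (ha1 : a < 1)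
    (hES : ∀ x, E x ∈ S) (hHB : ∀ x ∈ S, |H x| ≤ B) (hE : ContinuousOn E S)
    (hH : ContinuousOn H S) : ContinuousOn (iterateSeries E H a) S := by
  have hmaps : MapsTo E S S := fun y _ => hES y
  exact continuousOn_tsum
    (fun m => continuousOn_const.mul (hH.comp (hE.iterate hmaps m) (hmaps.iterate m)))
    ((summable_geometric_of_lt_one ha0 ha1).mul_right B)
    fun m _ hx => norm_iterateSeries_term_le ha0 hES hHB hx m

end IterateSeries

section Sawtooth

/-- On each cell `[k/N, (k+1)/N]` this rises with slope `1` from `0` to `r` on `[k/N, k/N + r]`,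
then falls linearly back to `0`. -/
noncomputable def sawtooth (N r x : ℝ) : ℝ :=
  min (Int.fract (N * x)) (N * r / (1 - N * r) * (1 - Int.fract (N * x))) / N

variable {N r : ℝ}

lemma continuous_sawtooth (hNr0 : 0 ≤ N * r) (hNr1 : N * r < 1) : Continuous (sawtooth N r) := by
  have hc : 0 ≤ N * r / (1 - N * r) := div_nonneg hNr0 (by linarith)
  have htent : ContinuousOn (fun v : ℝ => min v (N * r / (1 - N * r) * (1 - v))) (Icc 0 1) :=
    by fun_prop
  have := htent.comp_fract'' (by simp [hc])
  exact (this.comp (continuous_const_mul N)).div_const N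

lemma sawtooth_mem_Icc (hN : 0 < N) (hNr0 : 0 ≤ N * r) (hNr1 : N * r < 1) (x : ℝ) :
    sawtooth N r x ∈ Icc 0 r := by
  have hv0 := Int.fract_nonneg (N * x)
  have hv1 := Int.fract_lt_one (N * x)
  set v := Int.fract (N * x)
  have h1Nr : 0 < 1 - N * r := by linarith
  refine ⟨div_nonneg (le_min hv0 (by positivity)) hN.le, ?_⟩
  rw [sawtooth, div_le_iff₀ hN]
  rcases le_or_gt v (N * r) with h | h
  · linarith [min_le_left v (N * r / (1 - N * r) * (1 - v))]
  · have : N * r / (1 - N * r) * (1 - v) ≤ N * r := by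
      rw [div_mul_eq_mul_div, div_le_iff₀ h1Nr]
      nlinarith
    linarith [min_le_right v (N * r / (1 - N * r) * (1 - v))]

lemma sawtooth_eq_sub (hN : 0 < N) (hNr1 : N * r < 1) {k : ℤ} {x : ℝ} (hkx : k / N ≤ x)
    (hxk : x ≤ k / N + r) : sawtooth N r x = x - k / N := by
  have hNk : N * (k / N) = k := mul_div_cancel₀ _ hN.ne'
  have hv0 : 0 ≤ N * x - k := by nlinarith [mul_le_mul_of_nonneg_left hkx hN.le]
  have hv1 : N * x - k ≤ N * r := by nlinarith [mul_le_mul_of_nonneg_left hxk hN.le]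
  have hfract : Int.fract (N * x) = N * x - k := Int.fract_eq_iff.2 ⟨hv0, by linarith, k, by ring⟩
  have hmin : N * x - k ≤ N * r / (1 - N * r) * (1 - (N * x - k)) := by
    rw [div_mul_eq_mul_div, le_div_iff₀ (by linarith)]
    nlinarith
  rw [sawtooth, hfract, min_eq_left hmin]
  field_simp

end Sawtooth

section SymplecticForm

variable {n : ℕ}

def symplecticForm (u v : Fin n ⊕ Fin n → ℝ) : ℝ :=
  ∑ k, (u (Sum.inl k) * v (Sum.inr k) - u (Sum.inr k) * v (Sum.inl k))

lemma symplecticForm_sub_self_left (u v : Fin n ⊕ Fin n → ℝ) :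
    symplecticForm (v - u) v = -symplecticForm u v := by
  rw [symplecticForm, symplecticForm, ← Finset.sum_neg_distrib]
  exact Finset.sum_congr rfl fun k _ => by simp only [Pi.sub_apply]; ring

lemma abs_symplecticForm_le {r : ℝ} {u v : Fin n ⊕ Fin n → ℝ} (hu : ∀ i, u i ∈ Icc 0 r)
    (hv : ∀ i, v i ∈ Icc 0 1) : |symplecticForm u v| ≤ n * r := by
  have hprod (i j) : u i * v j ∈ Icc 0 r :=
    ⟨mul_nonneg (hu i).1 (hv j).1, (mul_le_of_le_one_right (hu i).1 (hv j).2).trans (hu i).2⟩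
  calc |symplecticForm u v|
      ≤ ∑ k, |u (Sum.inl k) * v (Sum.inr k) - u (Sum.inr k) * v (Sum.inl k)| :=
        Finset.abs_sum_le_sum_abs _ _
    _ ≤ ∑ _k : Fin n, r := Finset.sum_le_sum fun k _ =>
        abs_sub_le_of_nonneg_of_le (hprod _ _).1 (hprod _ _).2 (hprod _ _).1 (hprod _ _).2
    _ = n * r := by simp

end SymplecticForm

theorem stmt14_general (n N : ℕ) (r : ℝ) (hr0 : 0 < r) (hrN : r < 1 / N) :
    ∃ φ : ((Fin n ⊕ Fin n) → ℝ) → ℝ,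
      ContinuousOn φ {w | ∀ i, 0 ≤ w i ∧ w i ≤ 1} ∧
      (∀ g : (Fin n ⊕ Fin n) → Fin N, ∀ w : (Fin n ⊕ Fin n) → ℝ,
        (∀ i, (g i : ℝ) / N ≤ w i ∧ w i ≤ (g i : ℝ) / N + r) →
        φ w = r ^ 2 * φ (fun i => (w i - (g i : ℝ) / N) / r) -
          2 * ∑ k : Fin n,
            (((g (Sum.inl k) : ℝ) / N) * w (Sum.inr k) -
              ((g (Sum.inr k) : ℝ) / N) * w (Sum.inl k))) ∧
      (∀ w : (Fin n ⊕ Fin n) → ℝ, (∀ i, 0 ≤ w i ∧ w i ≤ 1) →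
        |φ w| ≤ 4 * n * r / (1 - r ^ 2)) := by
  have hN : (0 : ℝ) < N := Nat.cast_pos.2 <| Nat.pos_of_ne_zero fun h => by
    simp only [h, Nat.cast_zero, div_zero] at hrN
    linarith
  have hNr : N * r < 1 := by rwa [lt_div_iff₀' hN] at hrN
  have hr1 : r ^ 2 < 1 := by
    nlinarith [(Nat.one_le_cast (α := ℝ)).2 (Nat.cast_pos.1 hN)]
  let D := sawtooth N r
  have hD (x : ℝ) : D x ∈ Icc 0 r := sawtooth_mem_Icc hN (by positivity) hNr x
  let E : (Fin n ⊕ Fin n → ℝ) → (Fin n ⊕ Fin n → ℝ) := fun w i => D (w i) / r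
  let H : (Fin n ⊕ Fin n → ℝ) → ℝ := fun w => 2 * symplecticForm (fun i => D (w i)) w
  have hE : ∀ w, E w ∈ {w | ∀ i, 0 ≤ w i ∧ w i ≤ 1} := fun w i =>
    ⟨div_nonneg (hD _).1 hr0.le, div_le_one_of_le₀ (hD _).2 hr0.le⟩
  have hH : ∀ w ∈ {w | ∀ i, 0 ≤ w i ∧ w i ≤ 1}, |H w| ≤ 4 * n * r := fun w hw => by
    have := abs_symplecticForm_le (fun i => hD (w i)) hw
    rw [abs_mul, abs_two]
    nlinarith
  have hDcont : Continuous D := continuous_sawtooth (by positivity) hNr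
  refine ⟨iterateSeries E H (r ^ 2), continuousOn_iterateSeries (by positivity) hr1 hE hH
    (by fun_prop) (by simp only [H, symplecticForm]; fun_prop), fun g w hw => ?_,
    fun w hw => abs_iterateSeries_le (by positivity) hr1 hE hH hw⟩
  have hDw : (fun i => D (w i)) = w - fun i => (g i : ℝ) / N := funext fun i => by
    simpa using sawtooth_eq_sub (k := g i) hN hNr (by simpa using (hw i).1)
      (by simpa using (hw i).2)
  have hEw : E w = fun i => (w i - (g i : ℝ) / N) / r :=
    funext fun i => congrArg (· / r) (congrFun hDw i)
  have hHw : H w = -2 * symplecticForm (fun i => (g i : ℝ) / N) w := by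
    simp only [H, hDw, symplecticForm_sub_self_left]
    ring
  rw [iterateSeries_eq_add (by positivity) hr1 hE hH, hEw, hHw, symplecticForm]
  ring

/-- **Theorem (Strichartz-type fixed point function).** Let `N ≥ 2` be even, `0 < r < 1/N`,
and let the grid points `z_g = (g(i)/N)_i`, for `g : (Fin n ⊕ Fin n) → Fin N`, enumerate
`{0, 1/N, …, (N−1)/N}^{2n}`; set `Q_g = z_g + r·[0,1]^{2n}`. Then there is a continuous
`φ : [0,1]^{2n} → ℝ` with
`φ(w) = r²·φ((w − z_g)/r) − 2 Σ_{k=1}^n (z_{g,k} w_{k+n} − z_{g,k+n} w_k)` for `w ∈ Q_g`,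
and `‖φ‖_∞ ≤ 4nr/(1 − r²)`. Coordinates of `ℝ^{2n}` are indexed by `Fin n ⊕ Fin n`, with
`Sum.inl k` the `k`-th coordinate and `Sum.inr k` the `(k+n)`-th coordinate. -/
theorem stmt14 (n N : ℕ) (hn : 1 ≤ n) (hN : 2 ≤ N) (hNeven : Even N)
    (r : ℝ) (hr0 : 0 < r) (hrN : r < 1 / N) :
    ∃ φ : ((Fin n ⊕ Fin n) → ℝ) → ℝ,
      ContinuousOn φ {w | ∀ i, 0 ≤ w i ∧ w i ≤ 1} ∧
      (∀ g : (Fin n ⊕ Fin n) → Fin N, ∀ w : (Fin n ⊕ Fin n) → ℝ,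
        (∀ i, (g i : ℝ) / N ≤ w i ∧ w i ≤ (g i : ℝ) / N + r) →
        φ w = r ^ 2 * φ (fun i => (w i - (g i : ℝ) / N) / r) -
          2 * ∑ k : Fin n,
            (((g (Sum.inl k) : ℝ) / N) * w (Sum.inr k) -
              ((g (Sum.inr k) : ℝ) / N) * w (Sum.inl k))) ∧
      (∀ w : (Fin n ⊕ Fin n) → ℝ, (∀ i, 0 ≤ w i ∧ w i ≤ 1) →
        |φ w| ≤ 4 * n * r / (1 - r ^ 2)) :=
  stmt14_general n N r hr0 hrN
end
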